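/- Let E → M be a (topological or smooth) vector bundle over a Hausdorff manifold M, and let ℝ^× = ℝ \ {0} act on E \ 0_M (the complement of the zero section) by fiberwise scalar multiplication. Then this action is free and proper. -/

import Mathlib

/-!
For properness, take an ultrafilter on the preimage of a compact `K`; its image converges to some
`(v, w) ∈ K` with `v, w ≠ 0`. The base being Hausdorff, `w` lies over the same point as `v`, and in
a local trivialization `e` around that point `cᵢ • e(vᵢ) → e(w)` with `e(vᵢ) → e(v) ≠ 0`. Applying
a continuous functional that does not vanish at `e(v)` shows that the scalars converge to some `c₀`
with `c₀ • v = w`, and `c₀ ≠ 0` because `w ≠ 0`.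
-/

open Bundle Filter Topology

theorem exists_tendsto_of_tendsto_smul {α 𝕜 F : Type*} [RCLike 𝕜] [NormedAddCommGroup F]
    [NormedSpace 𝕜 F] {l : Filter α} [l.NeBot] {c : α → 𝕜} {f : α → F} {x y : F}
    (hf : Tendsto f l (𝓝 x)) (hx : x ≠ 0) (hcf : Tendsto (fun i => c i • f i) l (𝓝 y)) :
    ∃ c₀, Tendsto c l (𝓝 c₀) ∧ c₀ • x = y := by
  obtain ⟨g, -, hgx⟩ := exists_dual_vector 𝕜 x (norm_ne_zero_iff.2 hx)
  have hgx₀ : g x ≠ 0 := by simpa [hgx] using hx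
  have hgf := (g.continuous.tendsto x).comp hf
  have hc : Tendsto c l (𝓝 (g y / g x)) := by
    refine (((g.continuous.tendsto y).comp hcf).div hgf hgx₀).congr' ?_
    filter_upwards [hgf.eventually_ne hgx₀] with i hi
    simp only [Pi.div_apply, Function.comp_apply, map_smul, smul_eq_mul]
    exact mul_div_cancel_right₀ _ hi
  exact ⟨_, hc, tendsto_nhds_unique (hc.smul hf) hcf⟩

theorem FiberBundle.exists_tendsto_of_tendsto_smul {α 𝕜 B F : Type*} [RCLike 𝕜]
    [TopologicalSpace B] [T2Space B] [NormedAddCommGroup F] [NormedSpace 𝕜 F]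
    {E : B → Type*} [TopologicalSpace (TotalSpace F E)] [∀ b, TopologicalSpace (E b)]
    [∀ b, AddCommGroup (E b)] [∀ b, Module 𝕜 (E b)] [FiberBundle F E] [VectorBundle 𝕜 F E]
    {l : Filter α} [l.NeBot] {c : α → 𝕜} {v : α → TotalSpace F E} {v₀ w₀ : TotalSpace F E}
    (hv : Tendsto v l (𝓝 v₀)) (hv₀ : v₀.snd ≠ 0)
    (hcv : Tendsto (fun i => TotalSpace.mk' F (v i).proj (c i • (v i).snd)) l (𝓝 w₀)) :
    ∃ c₀, Tendsto c l (𝓝 c₀) ∧ TotalSpace.mk' F v₀.proj (c₀ • v₀.snd) = w₀ := by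
  set e := trivializationAt F E v₀.proj
  have hb : v₀.proj ∈ e.baseSet := FiberBundle.mem_baseSet_trivializationAt' v₀.proj
  have hproj : w₀.proj = v₀.proj :=
    tendsto_nhds_unique ((FiberBundle.continuous_proj F E).tendsto w₀ |>.comp hcv)
      (((FiberBundle.continuous_proj F E).tendsto v₀).comp hv :)
  have hv₀src : v₀ ∈ e.source := e.mem_source.2 hb
  have hw₀src : w₀ ∈ e.source := e.mem_source.2 (hproj ▸ hb)
  have hev : Tendsto (fun i => (e (v i)).2) l (𝓝 (e v₀).2) :=
    (continuous_snd.tendsto _).comp ((e.continuousAt hv₀src).tendsto.comp hv)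
  have hew : Tendsto (fun i => (e (TotalSpace.mk' F (v i).proj (c i • (v i).snd))).2) l
      (𝓝 (e w₀).2) :=
    (continuous_snd.tendsto _).comp ((e.continuousAt hw₀src).tendsto.comp hcv)
  have hlin : ∀ᶠ i in l, (e (TotalSpace.mk' F (v i).proj (c i • (v i).snd))).2 =
      c i • (e (v i)).2 := by
    filter_upwards [hv (e.open_source.mem_nhds hv₀src)] with i hi
    exact (e.linear 𝕜 (e.mem_source.1 hi)).map_smul (c i) (v i).snd
  have he₀ : (e v₀).2 ≠ 0 := (e.continuousLinearEquivAt 𝕜 v₀.proj hb).map_ne_zero_iff.2 hv₀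
  obtain ⟨c₀, hc, hc₀⟩ := _root_.exists_tendsto_of_tendsto_smul hev he₀ (hew.congr' hlin)
  have hmem : TotalSpace.mk' F v₀.proj (c₀ • v₀.snd) ∈ e.source := e.mem_source.2 hb
  refine ⟨c₀, hc, e.injOn hmem hw₀src (Prod.ext ?_ ?_)⟩
  · exact (e.coe_fst hmem).trans ((e.coe_fst hw₀src).trans hproj).symm
  · exact ((e.linear 𝕜 hb).map_smul c₀ v₀.snd).trans hc₀

/-- The scalar action of `ℝˣ` on the complement of the zero section of a vector bundle
is free and proper. Properness is phrased as: the map `(v, c) ↦ (v, c • v)` from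
`(E \ 0) × ℝˣ` to `(E \ 0) × (E \ 0)` pulls compact sets back to compact sets. -/
theorem stmt_7 {B F : Type*} [TopologicalSpace B] [T2Space B]
    [NormedAddCommGroup F] [NormedSpace ℝ F]
    (E : B → Type*) [TopologicalSpace (Bundle.TotalSpace F E)]
    [∀ b, TopologicalSpace (E b)] [∀ b, AddCommGroup (E b)] [∀ b, Module ℝ (E b)]
    [FiberBundle F E] [VectorBundle ℝ F E] :
    (∀ (c : ℝˣ) (v : Bundle.TotalSpace F E), v.snd ≠ 0 →
        (Bundle.TotalSpace.mk v.proj ((c : ℝ) • v.snd)) = v → c = 1) ∧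
    (∀ K : Set (Bundle.TotalSpace F E × Bundle.TotalSpace F E),
      K ⊆ {v | v.snd ≠ 0} ×ˢ {v | v.snd ≠ 0} → IsCompact K →
      IsCompact {p : Bundle.TotalSpace F E × ℝˣ | p.1.snd ≠ 0 ∧
        (p.1, Bundle.TotalSpace.mk p.1.proj ((p.2 : ℝ) • p.1.snd)) ∈ K}) := by
  refine ⟨fun c v hv h => ?_, fun K hK hKc => ?_⟩
  · exact Units.val_eq_one.1 <| smul_left_injective ℝ hv <| by
      simpa using TotalSpace.mk_injective v.proj h
  · rw [isCompact_iff_ultrafilter_le_nhds]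
    intro 𝒰 h𝒰
    obtain ⟨⟨v, w⟩, hvw, hlim⟩ := hKc.ultrafilter_le_nhds
      (𝒰.map fun p : TotalSpace F E × ℝˣ =>
        (p.1, TotalSpace.mk' F p.1.proj ((p.2 : ℝ) • p.1.snd)))
      ((tendsto_principal_principal.2 fun _ hp => hp.2).mono_left h𝒰)
    have hv : Tendsto (fun p : TotalSpace F E × ℝˣ => p.1) 𝒰 (𝓝 v) :=
      (continuous_fst.tendsto _).comp hlim
    obtain ⟨c₀, hc, rfl⟩ := FiberBundle.exists_tendsto_of_tendsto_smul hv (hK hvw).1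
      ((continuous_snd.tendsto _).comp hlim)
    have hc₀ : c₀ ≠ 0 := by
      rintro rfl
      exact (hK hvw).2 (zero_smul ℝ v.snd)
    refine ⟨(v, Units.mk0 c₀ hc₀), ⟨(hK hvw).1, hvw⟩, ?_⟩
    exact hv.prodMk_nhds (Units.isEmbedding_val₀.tendsto_nhds_iff.2 hc)
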